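/- arXiv:2407.06843 — 5 statements merged into one kernel-verified Lean document; each statement's English description precedes it below -/
import Mathlib

section
/- If f is analytic on the open unit disc and 0 ≤ r ≤ ρ < 1, then (1/2π)∫₀^{2π}|f(re^{iθ})|dθ ≤ (1/2π)∫₀^{2π}|f(ρe^{iθ})|dθ; that is, the radial L¹ means r ↦ ‖f_r‖₁ are nondecreasing. -/
/-!
By the Poisson formula, `‖f w‖ ≤ ⨍ P(w, z) ‖f z‖` over `|z| = ρ` for `|w| = r < ρ`, where `P` is the
Poisson kernel of the disc of radius `ρ`. Averaging over `|w| = r` and swapping the two circle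
averages weights `‖f z‖` by the average of `w ↦ P(w, z)` over `|w| = r`. For `w = r e^{iθ}` and
`z = ρ e^{it}`, `P(w, z)` is unchanged by exchanging `θ` and `t`, so this average is the total mass
of `P(r e^{it}, ·)`, namely `1`.
-/

open MeasureTheory Real Complex Metric

theorem continuous_uncurry_comp_circleMap {X : Type*} [TopologicalSpace X] {F : ℂ → ℂ → X}
    {c₁ c₂ : ℂ} {R₁ R₂ : ℝ}
    (hF : ContinuousOn (Function.uncurry F) (sphere c₁ |R₁| ×ˢ sphere c₂ |R₂|)) :
    Continuous (Function.uncurry fun θ t => F (circleMap c₁ R₁ θ) (circleMap c₂ R₂ t)) :=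
  hF.comp_continuous (f := fun p : ℝ × ℝ => (circleMap c₁ R₁ p.1, circleMap c₂ R₂ p.2))
    (by fun_prop) fun _ => ⟨circleMap_mem_sphere' _ _ _, circleMap_mem_sphere' _ _ _⟩

section CircleAverage

variable {E : Type*} [NormedAddCommGroup E] [NormedSpace ℝ E]

theorem norm_circleAverage_le_circleAverage_norm (f : ℂ → E) (c : ℂ) (R : ℝ) :
    ‖circleAverage f c R‖ ≤ circleAverage (‖f ·‖) c R := by
  rw [circleAverage_def, circleAverage_def, norm_smul, smul_eq_mul,
    Real.norm_of_nonneg (by positivity)]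
  gcongr
  exact intervalIntegral.norm_integral_le_integral_norm two_pi_pos.le

variable {F : ℂ → ℂ → E} {c₁ c₂ : ℂ} {R₁ R₂ : ℝ}

theorem circleIntegrable_circleAverage
    (hF : ContinuousOn (Function.uncurry F) (sphere c₁ |R₁| ×ˢ sphere c₂ |R₂|)) :
    CircleIntegrable (fun w => circleAverage (F w) c₂ R₂) c₁ R₁ :=
  (continuous_const.smul (intervalIntegral.continuous_parametric_intervalIntegral_of_continuous'
    (continuous_uncurry_comp_circleMap hF) 0 (2 * π))).intervalIntegrable _ _

theorem circleAverage_circleAverage_comm [CompleteSpace E]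
    (hF : ContinuousOn (Function.uncurry F) (sphere c₁ |R₁| ×ˢ sphere c₂ |R₂|)) :
    circleAverage (fun w => circleAverage (F w) c₂ R₂) c₁ R₁
      = circleAverage (fun z => circleAverage (F · z) c₁ R₁) c₂ R₂ := by
  simp only [circleAverage_def, intervalIntegral.integral_smul, smul_smul, mul_comm]
  congr 1
  refine intervalIntegral_intervalIntegral_swap ?_
  exact (continuous_uncurry_comp_circleMap hF).continuousOn.integrableOn_compact
    (isCompact_uIcc.prod isCompact_uIcc) |>.mono_set
    (Set.prod_mono Set.uIoc_subset_uIcc Set.uIoc_subset_uIcc)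

end CircleAverage

theorem poissonKernel_nonneg {c w z : ℂ} (h : ‖w - c‖ ≤ ‖z - c‖) : 0 ≤ poissonKernel c w z := by
  rw [poissonKernel_def]
  have := pow_le_pow_left₀ (norm_nonneg _) h 2
  exact div_nonneg (by linarith) (by positivity)

theorem circleAverage_poissonKernel {c w : ℂ} {R : ℝ} (hw : w ∈ ball c R) :
    circleAverage (poissonKernel c w) c R = 1 := by
  have h := (differentiable_const (1 : ℂ)).diffContOnCl.circleAverage_poissonKernel_smul hw
  simp only [circleAverage_def, Pi.smul_apply', Complex.real_smul, mul_one,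
    intervalIntegral.integral_ofReal] at h
  exact_mod_cast h

theorem norm_circleMap_sub_circleMap_comm (r ρ θ t : ℝ) :
    ‖circleMap 0 ρ t - circleMap 0 r θ‖ = ‖circleMap 0 ρ θ - circleMap 0 r t‖ := by
  rw [← sq_eq_sq₀ (norm_nonneg _) (norm_nonneg _)]
  simp only [Complex.sq_norm, Complex.normSq_apply, circleMap_zero, Complex.sub_re,
    Complex.sub_im, Complex.re_ofReal_mul, Complex.im_ofReal_mul, Complex.exp_ofReal_mul_I_re,
    Complex.exp_ofReal_mul_I_im]
  linear_combination (ρ ^ 2 - r ^ 2) * Real.sin_sq_add_cos_sq t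
    - (ρ ^ 2 - r ^ 2) * Real.sin_sq_add_cos_sq θ

theorem poissonKernel_circleMap_comm (r ρ θ t : ℝ) :
    poissonKernel 0 (circleMap 0 r θ) (circleMap 0 ρ t)
      = poissonKernel 0 (circleMap 0 r t) (circleMap 0 ρ θ) := by
  simp only [poissonKernel_def, sub_zero, norm_circleMap_zero,
    norm_circleMap_sub_circleMap_comm r ρ θ t]

theorem circleAverage_poissonKernel_left {r : ℝ} {z : ℂ} (hr : |r| < ‖z‖) :
    circleAverage (poissonKernel 0 · z) 0 r = 1 := by
  obtain ⟨t, ht⟩ : ∃ t, circleMap 0 ‖z‖ t = z :=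
    ⟨arg z, by rw [circleMap_zero, norm_mul_exp_arg_mul_I]⟩
  rw [← ht]
  calc circleAverage (poissonKernel 0 · (circleMap 0 ‖z‖ t)) 0 r
      = circleAverage (poissonKernel 0 (circleMap 0 r t)) 0 ‖z‖ := by
        simp only [circleAverage_def, poissonKernel_circleMap_comm r ‖z‖ _ t]
    _ = 1 := circleAverage_poissonKernel (by simpa using hr)

section Holomorphic

variable {E : Type*} [NormedAddCommGroup E] [NormedSpace ℂ E] [CompleteSpace E]

theorem DiffContOnCl.norm_le_circleAverage_poissonKernel_mul_norm {f : ℂ → E} {c w : ℂ} {R : ℝ}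
    (hf : DiffContOnCl ℂ f (ball c R)) (hw : w ∈ ball c R) :
    ‖f w‖ ≤ Real.circleAverage (fun z => poissonKernel c w z * ‖f z‖) c R := by
  calc ‖f w‖ = ‖Real.circleAverage (poissonKernel c w • f) c R‖ := by
        rw [hf.circleAverage_poissonKernel_smul hw]
    _ ≤ Real.circleAverage (‖(poissonKernel c w • f) ·‖) c R :=
        norm_circleAverage_le_circleAverage_norm _ _ _
    _ = Real.circleAverage (fun z => poissonKernel c w z * ‖f z‖) c R := by
        refine circleAverage_congr_sphere fun z hz => ?_
        have hwz : ‖w - c‖ ≤ ‖z - c‖ := by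
          rw [mem_sphere_iff_norm, abs_of_pos (pos_of_mem_ball hw)] at hz
          exact hz ▸ (mem_ball_iff_norm.mp hw).le
        simp [norm_smul, abs_of_nonneg (poissonKernel_nonneg hwz)]

theorem DiffContOnCl.circleAverage_norm_le {f : ℂ → E} {r ρ : ℝ}
    (hf : DiffContOnCl ℂ f (ball 0 ρ)) (hr : 0 ≤ r) (hrρ : r ≤ ρ) :
    Real.circleAverage (‖f ·‖) 0 r ≤ Real.circleAverage (‖f ·‖) 0 ρ := by
  rcases hrρ.eq_or_lt with rfl | hrρ
  · rfl
  have hρ : 0 < ρ := hr.trans_lt hrρ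
  have hfc : ContinuousOn f (closedBall 0 ρ) := closure_ball (0 : ℂ) hρ.ne' ▸ hf.continuousOn
  have hsr : sphere (0 : ℂ) |r| ⊆ ball 0 ρ := by
    rw [abs_of_nonneg hr]; exact sphere_subset_ball hrρ
  have hsρ : sphere (0 : ℂ) |ρ| ⊆ closedBall 0 ρ := by
    rw [abs_of_pos hρ]; exact sphere_subset_closedBall
  set K : ℂ → ℂ → ℝ := fun w z => poissonKernel 0 w z * ‖f z‖
  have hK : ContinuousOn (Function.uncurry K) (sphere 0 |r| ×ˢ sphere 0 |ρ|) := by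
    have hne : ∀ p ∈ sphere (0 : ℂ) |r| ×ˢ sphere 0 |ρ|, ‖p.2 - p.1‖ ^ 2 ≠ 0 := by
      rintro ⟨w, z⟩ ⟨hw, hz⟩
      rw [mem_sphere_zero_iff_norm, abs_of_nonneg hr] at hw
      rw [mem_sphere_zero_iff_norm, abs_of_pos hρ] at hz
      refine pow_ne_zero 2 (norm_ne_zero_iff.mpr (sub_ne_zero.mpr fun h => hrρ.ne ?_))
      rw [← hw, ← hz, h]
    simp only [K, Function.uncurry_def, poissonKernel_def, sub_zero]
    exact ((by fun_prop : Continuous fun p : ℂ × ℂ => ‖p.2‖ ^ 2 - ‖p.1‖ ^ 2).continuousOn.div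
      (by fun_prop) hne).mul ((hfc.comp continuousOn_snd fun p hp => hsρ hp.2).norm)
  calc Real.circleAverage (‖f ·‖) 0 r
      ≤ Real.circleAverage (fun w => Real.circleAverage (K w) 0 ρ) 0 r :=
        circleAverage_mono
          (hfc.norm.mono fun w hw => ball_subset_closedBall (hsr hw)).circleIntegrable'
          (circleIntegrable_circleAverage hK)
          fun w hw => hf.norm_le_circleAverage_poissonKernel_mul_norm (hsr hw)
    _ = Real.circleAverage (fun z => Real.circleAverage (K · z) 0 r) 0 ρ :=
        circleAverage_circleAverage_comm hK
    _ = Real.circleAverage (‖f ·‖) 0 ρ := by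
        refine circleAverage_congr_sphere fun z hz => ?_
        have hz' : |r| < ‖z‖ := by
          rw [mem_sphere_zero_iff_norm] at hz; rwa [hz, abs_of_pos hρ, abs_of_nonneg hr]
        calc Real.circleAverage (K · z) 0 r
            = ‖f z‖ * Real.circleAverage (poissonKernel 0 · z) 0 r := by
              simp only [K, mul_comm _ ‖f z‖]
              exact circleAverage_fun_smul (a := ‖f z‖) (f := (poissonKernel 0 · z))
          _ = ‖f z‖ := by rw [circleAverage_poissonKernel_left hz', mul_one]

end Holomorphic

/-- The radial `L¹` means of a function analytic in the unit disc are nondecreasing. -/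
theorem radial_L1_means_monotone (f : ℂ → ℂ)
    (hf : DifferentiableOn ℂ f (ball (0 : ℂ) 1))
    (r ρ : ℝ) (hr : 0 ≤ r) (hrρ : r ≤ ρ) (hρ : ρ < 1) :
    (2 * π)⁻¹ * ∫ θ in (0 : ℝ)..(2 * π),
        ‖f (r * Complex.exp (θ * Complex.I))‖
      ≤ (2 * π)⁻¹ * ∫ θ in (0 : ℝ)..(2 * π),
        ‖f (ρ * Complex.exp (θ * Complex.I))‖ := by
  have key := (hf.diffContOnCl_ball (closedBall_subset_ball hρ)).circleAverage_norm_le hr hrρ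
  simpa only [circleAverage_def, circleMap_zero, smul_eq_mul] using key
end

section
/- If g is holomorphic on a neighborhood of the closed disc of radius ρ (so its power series at 0 converges absolutely for |z| ≤ ρ) and 0 ≤ r ≤ ρ, then ‖g_r − g_ρ‖₂ ≤ √(‖g_ρ‖₂² − ‖g_r‖₂²), where ‖g_r‖₂² = (1/2π)∫₀^{2π}|g(re^{iθ})|² dθ. -/
/-!
Expand `g(z) = ∑ aₙ zⁿ`, absolutely convergent on `|z| ≤ ρ`. Parseval's identity on the unit
circle, passed from polynomials to absolutely convergent power series by dominated convergence,
gives `‖g_r − g_ρ‖₂² = ∑ |aₙ|² (ρⁿ − rⁿ)²` and `‖g_ρ‖₂² − ‖g_r‖₂² = ∑ |aₙ|² (ρ²ⁿ − r²ⁿ)`, and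
`(ρⁿ − rⁿ)² ≤ ρ²ⁿ − r²ⁿ` termwise because `0 ≤ rⁿ ≤ ρⁿ`.
-/

open MeasureTheory Real Complex Metric Filter Topology Finset

open Polynomial in
lemma circleAverage_sq_norm_sum_range (c : ℕ → ℂ) (N : ℕ) :
    circleAverage (fun z => ‖∑ n ∈ range N, c n * z ^ n‖ ^ 2) 0 1 = ∑ n ∈ range N, ‖c n‖ ^ 2 := by
  set P : ℂ[X] := ∑ n ∈ range N, monomial n (c n)
  have hcoeff (i : ℕ) : P.coeff i = if i ∈ range N then c i else 0 := by
    simp [P, coeff_monomial]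
  have heval (z : ℂ) : P.eval z = ∑ n ∈ range N, c n * z ^ n := by
    simp [P, eval_finsetSum]
  simp_rw [← heval, ← sum_sq_norm_coeff_eq_circleAverage]
  rw [Finset.sum_subset (fun i hi => ?_) (fun i _ hi => by simp [notMem_support_iff.mp hi])]
  · exact Finset.sum_congr rfl fun i hi => by rw [hcoeff, if_pos hi]
  · by_contra h
    exact mem_support_iff.mp hi (by rw [hcoeff, if_neg h])

lemma norm_sum_range_mul_pow_le_tsum {c : ℕ → ℂ} (hc : Summable fun n => ‖c n‖) {z : ℂ}
    (hz : ‖z‖ = 1) (N : ℕ) : ‖∑ n ∈ range N, c n * z ^ n‖ ≤ ∑' n, ‖c n‖ :=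
  calc ‖∑ n ∈ range N, c n * z ^ n‖ ≤ ∑ n ∈ range N, ‖c n‖ :=
        norm_sum_le_of_le _ fun n _ => by simp [hz]
    _ ≤ ∑' n, ‖c n‖ := hc.sum_le_tsum _ fun n _ => norm_nonneg _

theorem hasSum_sq_norm_circleAverage {c : ℕ → ℂ} {F : ℂ → ℂ} (hc : Summable fun n => ‖c n‖)
    (hF : ∀ z ∈ sphere (0 : ℂ) 1, HasSum (fun n => c n * z ^ n) (F z)) :
    HasSum (fun n => ‖c n‖ ^ 2) (circleAverage (fun z => ‖F z‖ ^ 2) 0 1) := by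
  rw [hasSum_iff_tendsto_nat_of_nonneg (fun n => by positivity)]
  simp_rw [← circleAverage_sq_norm_sum_range, circleAverage_def]
  refine Tendsto.const_smul ?_ _
  refine intervalIntegral.tendsto_integral_filter_of_dominated_convergence
    (fun _ => (∑' n, ‖c n‖) ^ 2) (Eventually.of_forall fun N => ?_)
    (Eventually.of_forall fun N => ae_of_all _ fun θ _ => ?_) intervalIntegrable_const
    (ae_of_all _ fun θ _ => ?_)
  · exact Continuous.aestronglyMeasurable (by fun_prop)
  · rw [norm_pow, norm_norm]
    exact pow_le_pow_left₀ (norm_nonneg _)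
      (norm_sum_range_mul_pow_le_tsum hc (by simp) N) 2
  · exact ((hF _ (circleMap_mem_sphere 0 zero_le_one θ)).tendsto_sum_nat.norm.pow 2)

lemma sq_norm_smul_sub_smul_le {E : Type*} [SeminormedAddCommGroup E] [NormedSpace ℝ E]
    {x y : ℝ} (hx : 0 ≤ x) (hxy : x ≤ y) (v : E) :
    ‖x • v - y • v‖ ^ 2 ≤ ‖y • v‖ ^ 2 - ‖x • v‖ ^ 2 := by
  rw [← sub_smul, norm_smul, norm_smul, norm_smul, Real.norm_of_nonpos (by linarith),
    Real.norm_of_nonneg hx, Real.norm_of_nonneg (hx.trans hxy)]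
  nlinarith [mul_nonneg (mul_nonneg hx (sub_nonneg.2 hxy)) (sq_nonneg ‖v‖)]

theorem DifferentiableOn.exists_hasSum_pow {g : ℂ → ℂ} {R : ℝ} (hR : 0 < R)
    (hg : DifferentiableOn ℂ g (closedBall 0 R)) :
    ∃ a : ℕ → ℂ, ∀ z : ℂ, ‖z‖ < R →
      Summable (fun n => ‖a n * z ^ n‖) ∧ HasSum (fun n => a n * z ^ n) (g z) := by
  lift R to NNReal using hR.le
  have hp := hg.hasFPowerSeriesOnBall (by exact_mod_cast hR)
  refine ⟨(cauchyPowerSeries g 0 R).coeff, fun z hz => ?_⟩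
  have hz' : z ∈ eball (0 : ℂ) R := by
    rwa [mem_eball_zero_iff, enorm_eq_nnnorm, ENNReal.coe_lt_coe, ← NNReal.coe_lt_coe, coe_nnnorm]
  simp_rw [mul_comm _ (z ^ _), ← smul_eq_mul, ← FormalMultilinearSeries.apply_eq_pow_smul_coeff]
  exact ⟨FormalMultilinearSeries.summable_norm_apply _ (eball_subset_eball hp.r_le hz'),
    by simpa using hp.hasSum hz'⟩

/-- If `g` is holomorphic on a neighborhood `{|z| < ρ + ε}` of the closed disc of
radius `ρ` and `0 ≤ r ≤ ρ`, then `‖g_r − g_ρ‖₂ ≤ √(‖g_ρ‖₂² − ‖g_r‖₂²)`, where the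
`L²` norms are with respect to normalized arc length measure. -/
theorem L2_dilation_difference (g : ℂ → ℂ) (ρ ε : ℝ) (hε : 0 < ε)
    (hg : DifferentiableOn ℂ g (ball (0 : ℂ) (ρ + ε)))
    (r : ℝ) (hr : 0 ≤ r) (hrρ : r ≤ ρ) :
    Real.sqrt ((2 * π)⁻¹ * ∫ θ in (0 : ℝ)..(2 * π),
        ‖g (r * Complex.exp (θ * Complex.I))
          - g (ρ * Complex.exp (θ * Complex.I))‖ ^ 2)
      ≤ Real.sqrt
          (((2 * π)⁻¹ * ∫ θ in (0 : ℝ)..(2 * π),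
              ‖g (ρ * Complex.exp (θ * Complex.I))‖ ^ 2)
            - ((2 * π)⁻¹ * ∫ θ in (0 : ℝ)..(2 * π),
              ‖g (r * Complex.exp (θ * Complex.I))‖ ^ 2)) := by
  have hρ : 0 ≤ ρ := hr.trans hrρ
  obtain ⟨a, ha⟩ := (hg.mono (closedBall_subset_ball
    (by linarith : ρ + ε / 2 < ρ + ε))).exists_hasSum_pow (by linarith)
  have hseries (s : ℝ) (hs : 0 ≤ s) (hsρ : s ≤ ρ) : Summable (fun n => ‖s ^ n • a n‖) ∧
      ∀ z ∈ sphere (0 : ℂ) 1, HasSum (fun n => s ^ n • a n * z ^ n) (g (s * z)) := by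
    have hlt (z : ℂ) (hz : z ∈ sphere (0 : ℂ) 1) : ‖(s : ℂ) * z‖ < ρ + ε / 2 := by
      rw [norm_mul, mem_sphere_zero_iff_norm.mp hz, Complex.norm_of_nonneg hs]; linarith
    constructor
    · simpa [mul_comm, Complex.real_smul] using (ha s (by simpa using hlt 1 (by simp))).1
    · intro z hz
      simpa [mul_pow, Complex.real_smul, mul_comm, mul_left_comm] using (ha _ (hlt z hz)).2
  obtain ⟨hsum_r, hg_r⟩ := hseries r hr hrρ
  obtain ⟨hsum_ρ, hg_ρ⟩ := hseries ρ hρ le_rfl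
  have H_r := hasSum_sq_norm_circleAverage hsum_r hg_r
  have H_ρ := hasSum_sq_norm_circleAverage hsum_ρ hg_ρ
  have H_diff := hasSum_sq_norm_circleAverage
    ((hsum_r.add hsum_ρ).of_nonneg_of_le (fun _ => norm_nonneg _) fun _ => norm_sub_le _ _)
    fun z hz => by simpa only [sub_mul] using (hg_r z hz).sub (hg_ρ z hz)
  simp only [circleAverage_def, circleMap_zero, ofReal_one, one_mul, smul_eq_mul]
    at H_r H_ρ H_diff
  exact sqrt_le_sqrt <| hasSum_le
    (fun n => sq_norm_smul_sub_smul_le (pow_nonneg hr n) (pow_le_pow_left₀ hr hrρ n) (a n))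
    H_diff (H_ρ.sub H_r)
end

section
/- If μ is a finite complex Borel measure on the unit circle whose Fourier coefficients μ̂(k) vanish for all k < 0, then the Poisson extension 𝔓μ(z) = ∫₀^{2π} (1−|z|²)/|e^{iθ}−z|² dμ(e^{iθ}) is an analytic function of z on the open unit disc. -/
open MeasureTheory Complex Metric

/-- The integral of a function against a complex measure, defined via the Jordan
decompositions of the real and imaginary parts. -/
noncomputable def cmIntegral {α : Type*} [MeasurableSpace α]
    (μ : MeasureTheory.ComplexMeasure α) (f : α → ℂ) : ℂ :=
  ((∫ x, f x ∂μ.re.toJordanDecomposition.posPart)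
      - ∫ x, f x ∂μ.re.toJordanDecomposition.negPart)
    + Complex.I * ((∫ x, f x ∂μ.im.toJordanDecomposition.posPart)
      - ∫ x, f x ∂μ.im.toJordanDecomposition.negPart)

/-- The Poisson extension of a complex measure on the circle (modelled as
`AddCircle 1`, with `x` corresponding to the boundary point `e^{2πix}`). -/
noncomputable def poissonExt (μ : MeasureTheory.ComplexMeasure (AddCircle (1 : ℝ)))
    (z : ℂ) : ℂ :=
  cmIntegral μ fun x =>
    (((1 - ‖z‖ ^ 2) / ‖(fourier 1 x : ℂ) - z‖ ^ 2 : ℝ) : ℂ)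

/-!
For `‖z‖ < 1` and `‖w‖ = 1` the Poisson kernel is the sum of two geometric series,
`(1 - ‖z‖²) / ‖w - z‖² = ∑ zⁿ w̄ⁿ + ∑ z̄ⁿ⁺¹ wⁿ⁺¹`, dominated by `2 ‖z‖ⁿ`, so it can be integrated
term by term against `μ`. This gives `𝔓μ(z) = ∑ μ̂(n) zⁿ + ∑ μ̂(-n-1) z̄ⁿ⁺¹`. The hypothesis
kills the antiholomorphic series, and what remains is a power series with bounded coefficients,
hence holomorphic in the unit disc.
-/

open ComplexConjugate

lemma hasSum_integral_of_summable_bound {α ι E : Type*} [MeasurableSpace α] [Countable ι]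
    [NormedAddCommGroup E] [NormedSpace ℝ E] {ν : Measure α} [IsFiniteMeasure ν]
    {F : ι → α → E} {f : α → E} {u : ι → ℝ} (hF : ∀ n, StronglyMeasurable (F n))
    (hFu : ∀ n x, ‖F n x‖ ≤ u n) (hu : Summable u) (hFf : ∀ x, HasSum (F · x) (f x)) :
    HasSum (fun n => ∫ x, F n x ∂ν) (∫ x, f x ∂ν) :=
  hasSum_integral_of_dominated_convergence (fun n _ => u n) (fun n => (hF n).aestronglyMeasurable)
    (fun n => .of_forall (hFu n)) (.of_forall fun _ => hu) (integrable_const _) (.of_forall hFf)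

section ComplexMeasure

variable {α : Type*} [MeasurableSpace α] (μ : ComplexMeasure α)

lemma cmIntegral_const_mul (c : ℂ) (f : α → ℂ) :
    cmIntegral μ (fun x => c * f x) = c * cmIntegral μ f := by
  simp only [cmIntegral, integral_const_mul]
  ring

lemma cmIntegral_add {f g : α → ℂ}
    (hf : ∀ (ν : Measure α) [IsFiniteMeasure ν], Integrable f ν)
    (hg : ∀ (ν : Measure α) [IsFiniteMeasure ν], Integrable g ν) :
    cmIntegral μ (fun x => f x + g x) = cmIntegral μ f + cmIntegral μ g := by
  simp only [cmIntegral, integral_add (hf _) (hg _)]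
  ring

lemma norm_cmIntegral_le {f : α → ℂ} {M : ℝ} (hf : ∀ x, ‖f x‖ ≤ M) :
    ‖cmIntegral μ f‖ ≤ M * (μ.re.toJordanDecomposition.posPart.real Set.univ
      + μ.re.toJordanDecomposition.negPart.real Set.univ
      + μ.im.toJordanDecomposition.posPart.real Set.univ
      + μ.im.toJordanDecomposition.negPart.real Set.univ) := by
  have h (ν : Measure α) [IsFiniteMeasure ν] : ‖∫ x, f x ∂ν‖ ≤ M * ν.real Set.univ :=
    norm_integral_le_of_norm_le_const (.of_forall hf)
  calc ‖cmIntegral μ f‖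
      ≤ ‖∫ x, f x ∂μ.re.toJordanDecomposition.posPart‖
        + ‖∫ x, f x ∂μ.re.toJordanDecomposition.negPart‖
        + (‖∫ x, f x ∂μ.im.toJordanDecomposition.posPart‖
        + ‖∫ x, f x ∂μ.im.toJordanDecomposition.negPart‖) := by
        refine (norm_add_le _ _).trans (add_le_add (norm_sub_le _ _) ?_)
        rw [norm_mul, norm_I, one_mul]
        exact norm_sub_le _ _
    _ ≤ _ := by
        linarith [h μ.re.toJordanDecomposition.posPart, h μ.re.toJordanDecomposition.negPart,
          h μ.im.toJordanDecomposition.posPart, h μ.im.toJordanDecomposition.negPart]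

lemma hasSum_cmIntegral {ι : Type*} [Countable ι] {F : ι → α → ℂ} {f : α → ℂ} {u : ι → ℝ}
    (hF : ∀ n, StronglyMeasurable (F n)) (hFu : ∀ n x, ‖F n x‖ ≤ u n) (hu : Summable u)
    (hFf : ∀ x, HasSum (F · x) (f x)) :
    HasSum (fun n => cmIntegral μ (F n)) (cmIntegral μ f) := by
  have h (ν : Measure α) [IsFiniteMeasure ν] :=
    hasSum_integral_of_summable_bound (ν := ν) hF hFu hu hFf
  exact (h _ |>.sub (h _)).add ((h _ |>.sub (h _)).mul_left I)

end ComplexMeasure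

lemma hasSum_poissonKernel {w z : ℂ} (hw : ‖w‖ = 1) (hz : ‖z‖ < 1) :
    HasSum (fun n : ℕ => z ^ n * conj w ^ n + conj z ^ (n + 1) * w ^ (n + 1))
      (((1 - ‖z‖ ^ 2) / ‖w - z‖ ^ 2 : ℝ) : ℂ) := by
  have ha : ‖z * conj w‖ < 1 := by simpa [hw] using hz
  have hb : ‖conj z * w‖ < 1 := by simpa [hw] using hz
  have hw' : w * conj w = 1 := by rw [mul_conj, normSq_eq_norm_sq, hw]; norm_num
  have hza : (1 : ℂ) - z * conj w ≠ 0 := sub_ne_zero.mpr fun h => by simp [← h] at ha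
  have hzb : (1 : ℂ) - conj z * w ≠ 0 := sub_ne_zero.mpr fun h => by simp [← h] at hb
  have hwz : ((‖w - z‖ ^ 2 : ℝ) : ℂ) = (1 - z * conj w) * (1 - conj z * w) := by
    rw [ofReal_pow, ← mul_conj', map_sub]
    linear_combination (1 - z * conj z) * hw'
  have hsum : (((1 - ‖z‖ ^ 2) / ‖w - z‖ ^ 2 : ℝ) : ℂ)
      = (1 - z * conj w)⁻¹ + conj z * w * (1 - conj z * w)⁻¹ := by
    rw [ofReal_div, ofReal_sub, ofReal_one, hwz, ofReal_pow, ← mul_conj']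
    field_simp
    linear_combination (z * conj z) * hw'
  rw [hsum]
  exact ((hasSum_geometric_of_norm_lt_one ha).add
    ((hasSum_geometric_of_norm_lt_one hb).mul_left (conj z * w))).congr_fun fun n => by ring

lemma fourier_natCast_apply {T : ℝ} (n : ℕ) (x : AddCircle T) :
    (fourier n x : ℂ) = fourier 1 x ^ n := by
  rw [fourier_apply, natCast_zsmul, AddCircle.toCircle_nsmul, Circle.coe_pow, fourier_one]

lemma norm_fourier_apply {T : ℝ} (n : ℤ) (x : AddCircle T) : ‖(fourier n x : ℂ)‖ = 1 :=
  Circle.norm_coe _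

lemma integrable_fourier {T : ℝ} [Fact (0 < T)] (ν : Measure (AddCircle T)) [IsFiniteMeasure ν]
    (c : ℂ) (n : ℤ) : Integrable (fun x => c * fourier n x) ν :=
  ((fourier n).continuous.integrable_of_hasCompactSupport (.of_compactSpace _)).const_mul c

lemma poissonExt_hasSum (μ : ComplexMeasure (AddCircle (1 : ℝ))) {z : ℂ} (hz : ‖z‖ < 1) :
    HasSum (fun n : ℕ => cmIntegral μ (fun x => fourier (-n) x) * z ^ n
      + cmIntegral μ (fun x => fourier (n + 1 : ℕ) x) * conj z ^ (n + 1)) (poissonExt μ z) := by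
  set F : ℕ → AddCircle (1 : ℝ) → ℂ :=
    fun n x => z ^ n * fourier (-n) x + conj z ^ (n + 1) * fourier (n + 1 : ℕ) x
  have hF_meas (n : ℕ) : StronglyMeasurable (F n) := by fun_prop
  have hF_le (n : ℕ) (x) : ‖F n x‖ ≤ 2 * ‖z‖ ^ n := by
    have : ‖z‖ ^ (n + 1) ≤ ‖z‖ ^ n := pow_le_pow_of_le_one (norm_nonneg z) hz.le n.le_succ
    calc ‖F n x‖ ≤ ‖z‖ ^ n + ‖z‖ ^ (n + 1) := by
          refine (norm_add_le _ _).trans_eq ?_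
          simp only [norm_mul, norm_pow, norm_conj, norm_fourier_apply, mul_one]
      _ ≤ 2 * ‖z‖ ^ n := by linarith
  have hF_sum (x) : HasSum (F · x) ((1 - ‖z‖ ^ 2) / ‖(fourier 1 x : ℂ) - z‖ ^ 2 : ℝ) := by
    convert hasSum_poissonKernel (norm_fourier_apply 1 x) hz using 2 with n
    simp only [F, fourier_neg, fourier_natCast_apply, map_pow]
  have h := hasSum_cmIntegral μ hF_meas hF_le
    ((summable_geometric_of_lt_one (norm_nonneg z) hz).mul_left 2) hF_sum
  refine h.congr_fun fun n => ?_
  rw [cmIntegral_add μ (fun ν _ => integrable_fourier ν _ _) (fun ν _ => integrable_fourier ν _ _),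
    cmIntegral_const_mul, cmIntegral_const_mul]
  ring

lemma differentiableOn_tsum_mul_pow {c : ℕ → ℂ} {C : ℝ} (hc : ∀ n, ‖c n‖ ≤ C) :
    DifferentiableOn ℂ (fun z => ∑' n, c n * z ^ n) (ball 0 1) := by
  intro z hz
  obtain ⟨r, hzr, hr1⟩ := exists_between (mem_ball_zero_iff.mp hz)
  have hC : 0 ≤ C := (norm_nonneg _).trans (hc 0)
  have hdiff : DifferentiableOn ℂ (fun z => ∑' n, c n * z ^ n) (ball 0 r) := by
    refine differentiableOn_tsum_of_summable_norm
      ((summable_geometric_of_lt_one ((norm_nonneg z).trans hzr.le) hr1).mul_left C)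
      (fun n => (differentiable_const _ |>.mul (differentiable_pow n)).differentiableOn)
      isOpen_ball fun n w hw => ?_
    rw [norm_mul, norm_pow]
    exact mul_le_mul (hc n) (pow_le_pow_left₀ (norm_nonneg w) (mem_ball_zero_iff.mp hw).le n)
      (by positivity) hC
  exact (hdiff.differentiableAt (isOpen_ball.mem_nhds (mem_ball_zero_iff.mpr hzr)))
    |>.differentiableWithinAt

/-- If the Fourier coefficients of a finite complex Borel measure on the circle
vanish for all `k < 0`, then its Poisson extension is analytic in the unit disc. -/
theorem poissonExt_analytic (μ : MeasureTheory.ComplexMeasure (AddCircle (1 : ℝ)))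
    (hμ : ∀ k : ℤ, k < 0 → cmIntegral μ (fun x => (fourier (-k) x : ℂ)) = 0) :
    DifferentiableOn ℂ (poissonExt μ) (ball (0 : ℂ) 1) := by
  have hpos (n : ℕ) : cmIntegral μ (fun x => (fourier (n + 1 : ℕ) x : ℂ)) = 0 := by
    simpa using hμ (-(n + 1)) (by omega)
  have hbound (n : ℕ) : ‖cmIntegral μ (fun x => (fourier (-n) x : ℂ))‖ ≤ 1 * _ :=
    norm_cmIntegral_le μ fun x => (norm_fourier_apply _ x).le
  refine (differentiableOn_tsum_mul_pow hbound).congr fun z hz => ?_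
  simpa only [hpos, zero_mul, add_zero]
    using (poissonExt_hasSum μ (mem_ball_zero_iff.mp hz)).tsum_eq.symm
end

section
/- The best constant C in the inequality ‖f_r − f_ρ‖₁ ≤ C √(‖f_ρ‖₁² − ‖f_r‖₁²) for f analytic in the unit disc and 0 ≤ r ≤ ρ < 1 satisfies C ≥ √2. Concretely: for f_ε(z) = 1 + εz, r = 0 and any fixed ρ ∈ (0,1), one has lim_{ε→0⁺} ‖(f_ε)_ρ − (f_ε)_0‖₁ / √(‖(f_ε)_ρ‖₁² − ‖(f_ε)_0‖₁²) = √2. -/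
/-!
Put `a = ερ`. The numerator is `a`, and the denominator is `√(M(a)² - 1)`, where `M(a)` is the
mean of `|1 + a e^{iθ}|`. With `x = 1 + a cos θ` and `F = |1 + a e^{iθ}|` one has
`F - x = a² sin² θ / (F + x)` and `2(1 - a) ≤ F + x ≤ 2(1 + a)`; averaging, and using that
`cos` has mean `0` and `sin²` mean `1/2`, gives `a²/(4(1 + a)) ≤ M(a) - 1 ≤ a²/(4(1 - a))`.
Hence `M(a)² - 1 ~ a²/2` and the quotient tends to `√2`.
-/

open MeasureTheory Real Complex Filter Topology

lemma norm_one_add_sub_one_add_re {z : ℂ} (hz : ‖z‖ < 1) :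
    ‖1 + z‖ - (1 + z.re) = z.im ^ 2 / (‖1 + z‖ + (1 + z.re)) := by
  have hre : 0 < 1 + z.re := by linarith [neg_abs_le z.re, abs_re_le_norm z]
  have hsq : ‖1 + z‖ ^ 2 = (1 + z.re) ^ 2 + z.im ^ 2 := by
    rw [Complex.sq_norm, normSq_apply]
    simp only [add_re, one_re, add_im, one_im, zero_add]
    ring
  rw [eq_div_iff (by positivity)]
  linear_combination hsq

lemma one_add_re_add_im_sq_div_le_norm_one_add {z : ℂ} (hz : ‖z‖ < 1) :
    1 + z.re + z.im ^ 2 / (2 * (1 + ‖z‖)) ≤ ‖1 + z‖ := by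
  have hre : 0 < 1 + z.re := by linarith [neg_abs_le z.re, abs_re_le_norm z]
  have hsum : ‖1 + z‖ + (1 + z.re) ≤ 2 * (1 + ‖z‖) := by
    linarith [norm_add_le 1 z, norm_one (α := ℂ), re_le_norm z]
  have := div_le_div_of_nonneg_left (sq_nonneg z.im) (by positivity) hsum
  linarith [norm_one_add_sub_one_add_re hz]

lemma norm_one_add_le_one_add_re_add_im_sq_div {z : ℂ} (hz : ‖z‖ < 1) :
    ‖1 + z‖ ≤ 1 + z.re + z.im ^ 2 / (2 * (1 - ‖z‖)) := by
  have hre : 1 - ‖z‖ ≤ 1 + z.re := by linarith [neg_abs_le z.re, abs_re_le_norm z]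
  have hsum : 2 * (1 - ‖z‖) ≤ ‖1 + z‖ + (1 + z.re) := by
    have : 1 - ‖z‖ ≤ ‖1 + z‖ := by
      simpa using norm_sub_norm_le (1 : ℂ) (-z)
    linarith
  have := div_le_div_of_nonneg_left (sq_nonneg z.im) (by linarith) hsum
  linarith [norm_one_add_sub_one_add_re hz]

lemma circleAverage_one_add_re_add_mul_im_sq (c a : ℝ) :
    circleAverage (fun z : ℂ => 1 + z.re + c * z.im ^ 2) 0 a = 1 + c * a ^ 2 / 2 := by
  have hint : ∫ θ in (0 : ℝ)..2 * π, (1 + a * Real.cos θ + c * (a * Real.sin θ) ^ 2)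
      = 2 * π + c * a ^ 2 * π := by
    simp only [mul_pow, ← mul_assoc]
    rw [intervalIntegral.integral_add (Continuous.intervalIntegrable (by fun_prop) _ _)
        (Continuous.intervalIntegrable (by fun_prop) _ _),
      intervalIntegral.integral_add (Continuous.intervalIntegrable (by fun_prop) _ _)
        (Continuous.intervalIntegrable (by fun_prop) _ _),
      intervalIntegral.integral_const_mul, intervalIntegral.integral_const_mul, integral_cos,
      integral_sin_sq]
    simp only [intervalIntegral.integral_const, smul_eq_mul, Real.sin_two_pi, Real.cos_two_pi,
      Real.sin_zero, Real.cos_zero]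
    ring
  rw [circleAverage_def, smul_eq_mul]
  simp only [circleMap_zero, re_ofReal_mul, im_ofReal_mul, exp_ofReal_mul_I_re,
    exp_ofReal_mul_I_im]
  rw [hint]
  field_simp

lemma circleAverage_norm_one_add_bounds {a : ℝ} (ha0 : 0 ≤ a) (ha1 : a < 1) :
    1 + a ^ 2 / (4 * (1 + a)) ≤ circleAverage (‖1 + ·‖) 0 a ∧
      circleAverage (‖1 + ·‖) 0 a ≤ 1 + a ^ 2 / (4 * (1 - a)) := by
  have hint (c : ℝ) : CircleIntegrable (fun z : ℂ => 1 + z.re + c * z.im ^ 2) 0 a :=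
    (by fun_prop : Continuous _).continuousOn.circleIntegrable'
  have hnorm : CircleIntegrable (‖1 + ·‖) 0 a :=
    (by fun_prop : Continuous _).continuousOn.circleIntegrable'
  have hz {z : ℂ} (hz : z ∈ Metric.sphere 0 |a|) : ‖z‖ = a := by
    simpa [abs_of_nonneg ha0] using hz
  constructor
  · calc 1 + a ^ 2 / (4 * (1 + a))
        = circleAverage (fun z : ℂ => 1 + z.re + (2 * (1 + a))⁻¹ * z.im ^ 2) 0 a := by
          rw [circleAverage_one_add_re_add_mul_im_sq]; field_simp; ring
      _ ≤ circleAverage (‖1 + ·‖) 0 a := by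
          refine circleAverage_mono (hint _) hnorm fun z hzs => ?_
          have := one_add_re_add_im_sq_div_le_norm_one_add ((hz hzs).trans_lt ha1)
          rwa [hz hzs, div_eq_inv_mul] at this
  · calc circleAverage (‖1 + ·‖) 0 a
        ≤ circleAverage (fun z : ℂ => 1 + z.re + (2 * (1 - a))⁻¹ * z.im ^ 2) 0 a := by
          refine circleAverage_mono hnorm (hint _) fun z hzs => ?_
          have := norm_one_add_le_one_add_re_add_im_sq_div ((hz hzs).trans_lt ha1)
          rwa [hz hzs, div_eq_inv_mul] at this
      _ = 1 + a ^ 2 / (4 * (1 - a)) := by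
          rw [circleAverage_one_add_re_add_mul_im_sq]; field_simp; ring

lemma tendsto_circleAverage_norm_one_add_sub_one_div_sq :
    Tendsto (fun a => (circleAverage (‖1 + ·‖) 0 a - 1) / a ^ 2) (𝓝[>] 0) (𝓝 (1 / 4)) := by
  have hlim (s : ℝ) : Tendsto (fun a : ℝ => 1 / (4 * (1 + s * a))) (𝓝[>] 0) (𝓝 (1 / 4)) := by
    have : ContinuousAt (fun a : ℝ => 1 / (4 * (1 + s * a))) 0 := by fun_prop (disch := norm_num)
    simpa using this.tendsto.mono_left nhdsWithin_le_nhds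
  refine tendsto_of_tendsto_of_tendsto_of_le_of_le' (hlim 1) (hlim (-1)) ?_ ?_ <;>
    filter_upwards [Ioo_mem_nhdsGT (zero_lt_one' ℝ)] with a ⟨ha0, ha1⟩ <;>
    have hbounds := circleAverage_norm_one_add_bounds ha0.le ha1
  · rw [le_div_iff₀ (by positivity)]
    have : a ^ 2 / (4 * (1 + a)) = 1 / (4 * (1 + 1 * a)) * a ^ 2 := by ring
    linarith [hbounds.1]
  · rw [div_le_iff₀ (by positivity)]
    have : a ^ 2 / (4 * (1 - a)) = 1 / (4 * (1 + -1 * a)) * a ^ 2 := by ring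
    linarith [hbounds.2]

lemma tendsto_div_sqrt_sq_sub_one {g : ℝ → ℝ}
    (hg : Tendsto (fun a => (g a - 1) / a ^ 2) (𝓝[>] 0) (𝓝 (1 / 4))) :
    Tendsto (fun a => a / √(g a ^ 2 - 1)) (𝓝[>] 0) (𝓝 √2) := by
  have hsq : Tendsto (fun a : ℝ => a ^ 2) (𝓝[>] 0) (𝓝 0) := by
    simpa using ((continuous_pow 2).tendsto (0 : ℝ)).mono_left nhdsWithin_le_nhds
  have hg1 : Tendsto g (𝓝[>] 0) (𝓝 1) := by
    have := (hg.mul hsq).add_const 1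
    rw [mul_zero, zero_add] at this
    refine this.congr' ?_
    filter_upwards [self_mem_nhdsWithin] with a (ha : 0 < a)
    field_simp
    ring
  have hX : Tendsto (fun a => (g a - 1) / a ^ 2 * (g a + 1)) (𝓝[>] 0) (𝓝 (1 / 2)) := by
    convert hg.mul (hg1.add_const 1) using 2
    norm_num
  have hsqrt2 : √2 = (√(1 / 2))⁻¹ := by
    rw [one_div, Real.sqrt_inv, inv_inv]
  rw [hsqrt2]
  refine ((continuous_sqrt.tendsto _).comp hX).inv₀ (by positivity) |>.congr' ?_
  filter_upwards [self_mem_nhdsWithin] with a (ha : 0 < a)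
  have : g a ^ 2 - 1 = (g a - 1) / a ^ 2 * (g a + 1) * a ^ 2 := by
    field_simp
    ring
  rw [Function.comp_apply, this, sqrt_mul' _ (sq_nonneg a), sqrt_sq ha.le]
  field_simp

theorem best_constant_lower_bound_general (ρ : ℝ) (hρ0 : 0 < ρ) :
    Tendsto (fun ε : ℝ =>
        ((2 * π)⁻¹ * ∫ θ in (0 : ℝ)..(2 * π),
            ‖(1 + ε * ρ * Complex.exp (θ * Complex.I)) - 1‖)
          / Real.sqrt (((2 * π)⁻¹ * ∫ θ in (0 : ℝ)..(2 * π),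
              ‖1 + ε * ρ * Complex.exp (θ * Complex.I)‖) ^ 2 - 1 ^ 2))
      (nhdsWithin 0 (Set.Ioi 0)) (nhds (Real.sqrt 2)) := by
  have hscale : Tendsto (ρ * ·) (𝓝[>] 0) (𝓝[>] 0) :=
    tendsto_iff_comap.2 (comap_mulLeft_nhdsGT_zero hρ0).ge
  refine (tendsto_div_sqrt_sq_sub_one tendsto_circleAverage_norm_one_add_sub_one_div_sq).comp
    hscale |>.congr' ?_
  filter_upwards [self_mem_nhdsWithin] with ε (hε : 0 < ε)
  have hnum : (2 * π)⁻¹ * ∫ θ in (0 : ℝ)..(2 * π), ‖(1 + ε * ρ * Complex.exp (θ * Complex.I)) - 1‖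
      = ρ * ε := by
    simp only [add_sub_cancel_left, Complex.norm_mul, norm_real, norm_eq_abs, abs_of_pos hε,
      abs_of_pos hρ0, norm_exp_ofReal_mul_I, mul_one, intervalIntegral.integral_const, sub_zero,
      smul_eq_mul]
    field_simp
  have hden : (2 * π)⁻¹ * ∫ θ in (0 : ℝ)..(2 * π), ‖1 + ε * ρ * Complex.exp (θ * Complex.I)‖
      = circleAverage (‖1 + ·‖) 0 (ρ * ε) := by
    simp [circleAverage_def, circleMap_zero, mul_comm]
  rw [hnum, hden, one_pow]
  rfl

/-- The best constant `C` in `‖f_r − f_ρ‖₁ ≤ C √(‖f_ρ‖₁² − ‖f_r‖₁²)` is at least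
`√2`: for `f_ε(z) = 1 + εz`, `r = 0` and fixed `ρ ∈ (0,1)`, the quotient
`‖(f_ε)_ρ − (f_ε)_0‖₁ / √(‖(f_ε)_ρ‖₁² − ‖(f_ε)_0‖₁²)` tends to `√2` as `ε → 0⁺`. -/
theorem best_constant_lower_bound (ρ : ℝ) (hρ0 : 0 < ρ) (hρ1 : ρ < 1) :
    Tendsto (fun ε : ℝ =>
        ((2 * π)⁻¹ * ∫ θ in (0 : ℝ)..(2 * π),
            ‖(1 + ε * ρ * Complex.exp (θ * Complex.I)) - 1‖)
          / Real.sqrt (((2 * π)⁻¹ * ∫ θ in (0 : ℝ)..(2 * π),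
              ‖1 + ε * ρ * Complex.exp (θ * Complex.I)‖) ^ 2 - 1 ^ 2))
      (nhdsWithin 0 (Set.Ioi 0)) (nhds (Real.sqrt 2)) :=
  best_constant_lower_bound_general ρ hρ0
end

section
/- Let f be holomorphic on the open unit disc, 0 < ρ < 1, and suppose f has no zeros on the circle |z| = ρ. Then there exist functions g, h holomorphic on {|z| < ρ + ε} for some ε > 0 such that f = g·h on that region and |g(z)|² = |h(z)|² = |f(z)| for all |z| = ρ. -/
/-!
Let `B` be the finite Blaschke product of the zeros of `f` in the disc of radius `ρ`. It is
holomorphic slightly beyond the circle `‖z‖ = ρ` and has modulus one on it, while `F = f / B` has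
no zeros on a slightly larger disc. On a disc a zero-free holomorphic function has a holomorphic
logarithm (a primitive of `F' / F`), hence a square root `h`. Then `g = B h` and `h` satisfy
`f = g h`, and `‖g‖ = ‖h‖ = ‖F‖ ^ (1 / 2) = ‖f‖ ^ (1 / 2)` on the circle.
-/

open Complex Metric Filter Function Topology Set ComplexConjugate

theorem exists_lt_ball_subset_of_closedBall_subset {E : Type*} [NormedAddCommGroup E]
    [NormedSpace ℝ E] [ProperSpace E] {x : E} {r : ℝ} (hr : 0 ≤ r) {V : Set E} (hV : IsOpen V)
    (h : closedBall x r ⊆ V) : ∃ R, r < R ∧ ball x R ⊆ V := by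
  obtain ⟨δ, hδ, hδV⟩ := (isCompact_closedBall x r).exists_thickening_subset_open hV h
  exact ⟨δ + r, by linarith, by rwa [thickening_closedBall hδ hr] at hδV⟩

theorem AnalyticOnNhd.finite_inter_preimage_zero {𝕜 E : Type*} [NontriviallyNormedField 𝕜]
    [NormedAddCommGroup E] [NormedSpace 𝕜 E] {f : 𝕜 → E} {U K : Set 𝕜} {x : 𝕜}
    (hf : AnalyticOnNhd 𝕜 f U) (hU : IsConnected U) (hx : x ∈ U) (hfx : f x ≠ 0)
    (hK : IsCompact K) (hKU : K ⊆ U) : (K ∩ f ⁻¹' {0}).Finite := by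
  have h := codiscreteWithin_mono hKU (hf.preimage_zero_mem_codiscreteWithin hfx hx hU)
  simpa [sdiff_eq] using hK.finite_sdiff_of_mem_codiscreteWithin h

theorem Differentiable.multiset_prod_map {ι 𝕜 𝔸 : Type*} [NontriviallyNormedField 𝕜]
    [NormedCommRing 𝔸] [NormedAlgebra 𝕜 𝔸] {s : Multiset ι} {g : ι → 𝕜 → 𝔸}
    (hg : ∀ i ∈ s, Differentiable 𝕜 (g i)) : Differentiable 𝕜 fun z ↦ (s.map (g · z)).prod := by
  classical
  exact fun z ↦ (HasFDerivAt.multiset_prod fun i hi ↦ (hg i hi z).hasFDerivAt).differentiableAt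

theorem DifferentiableOn.iterate_dslope {E : Type*} [NormedAddCommGroup E] [NormedSpace ℂ E]
    [CompleteSpace E] {f : ℂ → E} {U : Set ℂ} {a : ℂ} (hf : DifferentiableOn ℂ f U) (hU : U ∈ 𝓝 a) (n : ℕ) :
    DifferentiableOn ℂ ((swap dslope a)^[n] f) U := by
  induction n with
  | zero => exact hf
  | succ n ih =>
    rw [iterate_succ_apply']
    exact (differentiableOn_dslope hU).mpr ih

theorem exists_eq_pow_sub_mul_of_not_eventually_zero {U : Set ℂ} (hU : IsOpen U) {f : ℂ → ℂ}
    (hf : DifferentiableOn ℂ f U) {a : ℂ} (ha : a ∈ U) (hf0 : ¬ ∀ᶠ z in 𝓝 a, f z = 0) :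
    ∃ n : ℕ, ∃ G : ℂ → ℂ, DifferentiableOn ℂ G U ∧ G a ≠ 0 ∧ ∀ z, f z = (z - a) ^ n * G z := by
  obtain ⟨p, hp⟩ := hf.analyticAt (hU.mem_nhds ha)
  have hp0 : p ≠ 0 := mt hp.locally_zero_iff.mpr hf0
  exact ⟨p.order, _, hf.iterate_dslope (hU.mem_nhds ha) _, hp.iterate_dslope_fslope_ne_zero hp0,
    hp.eq_pow_order_mul_iterate_dslope⟩

theorem exists_eq_prod_sub_mul_of_zeros_subset {U : Set ℂ} (hU : IsOpen U) {f : ℂ → ℂ}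
    (hf : DifferentiableOn ℂ f U) (Z : Finset ℂ) (hZ : ∀ z ∈ U, f z = 0 → z ∈ Z) :
    ∃ (s : Multiset ℂ) (u : ℂ → ℂ), (∀ a ∈ s, a ∈ U ∧ f a = 0) ∧ DifferentiableOn ℂ u U ∧
      (∀ z ∈ U, u z ≠ 0) ∧ ∀ z ∈ U, f z = (s.map (z - ·)).prod * u z := by
  classical
  induction Z using Finset.induction_on generalizing f with
  | empty =>
    exact ⟨0, f, by simp, hf, fun z hz h0 ↦ by simpa using hZ z hz h0, by simp⟩
  | insert a Z haZ ih =>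
    by_cases ha : a ∈ U
    swap
    · refine ih hf fun z hz h0 ↦ ?_
      exact (Finset.mem_insert.mp (hZ z hz h0)).resolve_left (ne_of_mem_of_not_mem hz ha)
    have hf0 : ¬ ∀ᶠ z in 𝓝 a, f z = 0 := fun h ↦
      infinite_of_mem_nhds a (inter_mem h (hU.mem_nhds ha))
        ((insert a Z : Finset ℂ).finite_toSet.subset fun z hz ↦ hZ z hz.2 hz.1)
    obtain ⟨n, G, hG, hGa, hfG⟩ := exists_eq_pow_sub_mul_of_not_eventually_zero hU hf ha hf0
    have hGZ : ∀ z ∈ U, G z = 0 → z ∈ Z := fun z hz h0 ↦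
      (Finset.mem_insert.mp (hZ z hz (by rw [hfG, h0, mul_zero]))).resolve_left
        (by rintro rfl; exact hGa h0)
    obtain ⟨s, u, hsZ, hu, hu0, hGu⟩ := ih hG hGZ
    refine ⟨Multiset.replicate n a + s, u, ?_, hu, hu0, fun z hz ↦ ?_⟩
    · intro b hb
      rcases Multiset.mem_add.mp hb with hb | hb
      · obtain ⟨hn, rfl⟩ := Multiset.mem_replicate.mp hb
        exact ⟨ha, by rw [hfG, sub_self, zero_pow hn, zero_mul]⟩
      · exact ⟨(hsZ b hb).1, by rw [hfG, (hsZ b hb).2, mul_zero]⟩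
    · rw [hfG, hGu z hz, Multiset.map_add, Multiset.prod_add, Multiset.map_replicate,
        Multiset.prod_replicate, mul_assoc]

theorem exists_exp_eq_of_ne_zero_on_ball {c : ℂ} {r : ℝ} {F : ℂ → ℂ}
    (hF : DifferentiableOn ℂ F (ball c r)) (hF0 : ∀ z ∈ ball c r, F z ≠ 0) :
    ∃ L : ℂ → ℂ, DifferentiableOn ℂ L (ball c r) ∧ ∀ z ∈ ball c r, exp (L z) = F z := by
  rcases le_or_gt r 0 with hr | hr
  · exact ⟨0, by simp [ball_eq_empty.mpr hr]⟩
  have hc : c ∈ ball c r := mem_ball_self hr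
  -- `L` is a primitive of the logarithmic derivative, normalised so that `exp (L c) = F c`.
  obtain ⟨L, hLc, hL⟩ := ((hF.deriv isOpen_ball).div hF hF0).isExactOn_ball.with_val_at c
    (log (F c))
  have hK : ∀ z ∈ ball c r, HasDerivAt (fun w ↦ exp (-L w) * F w) 0 z := fun z hz ↦ by
    refine ((hL z hz).neg.cexp.mul
      (hF.differentiableAt (isOpen_ball.mem_nhds hz)).hasDerivAt).congr_deriv ?_
    simp only [Pi.div_apply]
    field_simp [hF0 z hz]
    ring
  have hK_const : ∀ z ∈ ball c r, exp (-L z) * F z = 1 := fun z hz ↦ by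
    rw [isOpen_ball.is_const_of_deriv_eq_zero (convex_ball c r).isPreconnected
      (fun w hw ↦ (hK w hw).differentiableAt.differentiableWithinAt)
      (fun w hw ↦ (hK w hw).deriv) hz hc, hLc, exp_neg, exp_log (hF0 c hc),
      inv_mul_cancel₀ (hF0 c hc)]
  refine ⟨L, fun z hz ↦ (hL z hz).differentiableAt.differentiableWithinAt, fun z hz ↦ ?_⟩
  rw [← one_mul (exp (L z)), ← hK_const z hz, exp_neg, mul_comm, ← mul_assoc,
    mul_inv_cancel₀ (exp_ne_zero _), one_mul]

theorem exists_sq_eq_of_ne_zero_on_ball {c : ℂ} {r : ℝ} {F : ℂ → ℂ}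
    (hF : DifferentiableOn ℂ F (ball c r)) (hF0 : ∀ z ∈ ball c r, F z ≠ 0) :
    ∃ h : ℂ → ℂ, DifferentiableOn ℂ h (ball c r) ∧ ∀ z ∈ ball c r, h z ^ 2 = F z := by
  obtain ⟨L, hL, hLF⟩ := exists_exp_eq_of_ne_zero_on_ball hF hF0
  refine ⟨fun z ↦ exp (L z / 2), (hL.div_const 2).cexp, fun z hz ↦ ?_⟩
  rw [← exp_nat_mul, ← hLF z hz]
  ring_nf

theorem norm_sq_sub_conj_mul_div_of_norm_eq {ρ : ℝ} (hρ : 0 < ρ) (a : ℂ) {z : ℂ} (hz : ‖z‖ = ρ) :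
    ‖((ρ : ℂ) ^ 2 - conj a * z) / ρ‖ = ‖z - a‖ := by
  have hρz : (ρ : ℂ) ^ 2 - conj a * z = z * conj (z - a) := by
    rw [map_sub, mul_sub, mul_conj, normSq_eq_norm_sq, hz]
    push_cast
    ring
  rw [hρz, norm_div, norm_mul, norm_conj, hz, norm_real, Real.norm_of_nonneg hρ.le,
    mul_div_cancel_left₀ _ hρ.ne']

theorem sq_sub_conj_mul_ne_zero {ρ : ℝ} {a z : ℂ} (ha : ‖a‖ < ρ) (hz : ‖z‖ ≤ ρ) :
    (ρ : ℂ) ^ 2 - conj a * z ≠ 0 := by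
  rw [sub_ne_zero]
  apply_fun (‖·‖)
  have hρ : 0 < ρ := (norm_nonneg a).trans_lt ha
  have : ‖a‖ * ‖z‖ < ρ * ρ := by nlinarith [norm_nonneg a, norm_nonneg z]
  simp only [norm_pow, norm_mul, norm_conj, norm_real, Real.norm_of_nonneg hρ.le]
  nlinarith

theorem Multiset.norm_prod_map_congr {ι α : Type*} [NormedField α] {s : Multiset ι}
    {f g : ι → α} (h : ∀ i ∈ s, ‖f i‖ = ‖g i‖) : ‖(s.map f).prod‖ = ‖(s.map g).prod‖ := by
  simp only [← normHom_apply, map_multiset_prod, Multiset.map_map]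
  exact congrArg _ (Multiset.map_congr rfl h)

theorem exists_factorization_gh_of_eq_prod_sub_mul {f u : ℂ → ℂ} {s : Multiset ℂ} {ρ R : ℝ}
    (hρ : 0 < ρ) (hρR : ρ < R) (hs : ∀ a ∈ s, ‖a‖ < ρ) (hu : DifferentiableOn ℂ u (ball 0 R))
    (hu0 : ∀ z ∈ ball (0 : ℂ) R, u z ≠ 0)
    (hfu : ∀ z ∈ ball (0 : ℂ) R, f z = (s.map (z - ·)).prod * u z) :
    ∃ ε : ℝ, 0 < ε ∧ ρ + ε ≤ R ∧
      ∃ g h : ℂ → ℂ,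
        DifferentiableOn ℂ g (ball (0 : ℂ) (ρ + ε)) ∧
        DifferentiableOn ℂ h (ball (0 : ℂ) (ρ + ε)) ∧
        (∀ z ∈ ball (0 : ℂ) (ρ + ε), f z = g z * h z) ∧
        (∀ z : ℂ, ‖z‖ = ρ → ‖g z‖ ^ 2 = ‖f z‖ ∧ ‖h z‖ ^ 2 = ‖f z‖) := by
  -- `P / Q` is the Blaschke product of the zeros `s`: it has modulus one on the circle `‖z‖ = ρ`.
  set P : ℂ → ℂ := fun z ↦ (s.map (z - ·)).prod
  set Q : ℂ → ℂ := fun z ↦ (s.map fun a ↦ ((ρ : ℂ) ^ 2 - conj a * z) / ρ).prod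
  have hPd : Differentiable ℂ P := Differentiable.multiset_prod_map fun a _ ↦ by fun_prop
  have hQd : Differentiable ℂ Q := Differentiable.multiset_prod_map fun a _ ↦ by fun_prop
  have hQ0 : closedBall (0 : ℂ) ρ ⊆ {z | Q z ≠ 0} := fun z hz ↦ by
    refine Multiset.prod_ne_zero fun h0 ↦ ?_
    obtain ⟨a, ha, hQa⟩ := Multiset.mem_map.mp h0
    exact div_ne_zero (sq_sub_conj_mul_ne_zero (hs a ha) (mem_closedBall_zero_iff.mp hz))
      (ofReal_ne_zero.mpr hρ.ne') hQa
  obtain ⟨R₂, hρR₂, hR₂⟩ := exists_lt_ball_subset_of_closedBall_subset hρ.le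
    (isOpen_ne_fun hQd.continuous continuous_const) hQ0
  set ε := min R R₂ - ρ
  have hεR : ball (0 : ℂ) (ρ + ε) ⊆ ball 0 R := ball_subset_ball (by simp [ε])
  have hεQ : ∀ z ∈ ball (0 : ℂ) (ρ + ε), Q z ≠ 0 := fun z hz ↦
    hR₂ (ball_subset_ball (by simp [ε]) hz)
  obtain ⟨h, hh, hh2⟩ := exists_sq_eq_of_ne_zero_on_ball (F := fun z ↦ u z * Q z)
    ((hu.mono hεR).mul hQd.differentiableOn) fun z hz ↦ mul_ne_zero (hu0 z (hεR hz)) (hεQ z hz)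
  refine ⟨ε, by simp [ε, hρR, hρR₂], by simp [ε], fun z ↦ P z / Q z * h z, h,
    (hPd.differentiableOn.div hQd.differentiableOn hεQ).mul hh, hh, fun z hz ↦ ?_, fun z hz ↦ ?_⟩
  · rw [hfu z (hεR hz), mul_assoc, ← sq, hh2 z hz]
    field_simp [hεQ z hz]
    exact mul_comm _ _
  have hz' : z ∈ ball (0 : ℂ) (ρ + ε) := by simp [ε, hz, hρR, hρR₂]
  have hQP : ‖Q z‖ = ‖P z‖ :=
    Multiset.norm_prod_map_congr fun a _ ↦ norm_sq_sub_conj_mul_div_of_norm_eq hρ a hz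
  have hh_norm : ‖h z‖ ^ 2 = ‖f z‖ := by
    rw [← norm_pow, hh2 z hz', hfu z (hεR hz'), norm_mul, norm_mul, hQP, mul_comm]
  refine ⟨?_, hh_norm⟩
  rw [norm_mul, norm_div, hQP, div_self (hQP ▸ norm_ne_zero_iff.mpr (hεQ z hz')), one_mul,
    hh_norm]

/-- If `f` is holomorphic on the unit disc, `0 < ρ < 1`, and `f` has no zeros on the
circle `|z| = ρ`, then `f` factors as `f = g·h` with `g, h` holomorphic on a
neighborhood `{|z| < ρ + ε}` of the closed disc of radius `ρ`, and
`|g|² = |h|² = |f|` on the circle `|z| = ρ`. -/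
theorem factorization_gh (f : ℂ → ℂ)
    (hf : DifferentiableOn ℂ f (ball (0 : ℂ) 1))
    (ρ : ℝ) (hρ0 : 0 < ρ) (hρ1 : ρ < 1)
    (hnz : ∀ z : ℂ, ‖z‖ = ρ → f z ≠ 0) :
    ∃ ε : ℝ, 0 < ε ∧ ρ + ε ≤ 1 ∧
      ∃ g h : ℂ → ℂ,
        DifferentiableOn ℂ g (ball (0 : ℂ) (ρ + ε)) ∧
        DifferentiableOn ℂ h (ball (0 : ℂ) (ρ + ε)) ∧
        (∀ z ∈ ball (0 : ℂ) (ρ + ε), f z = g z * h z) ∧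
        (∀ z : ℂ, ‖z‖ = ρ →
          ‖g z‖ ^ 2 = ‖f z‖ ∧
          ‖h z‖ ^ 2 = ‖f z‖) := by
  have hρ_norm : ‖(ρ : ℂ)‖ = ρ := by simp [hρ0.le]
  -- Near the circle, every zero of `f` lies inside the open disc of radius `ρ`.
  obtain ⟨R₁, hρR₁, hR₁⟩ := exists_lt_ball_subset_of_closedBall_subset hρ0.le
    (isOpen_ball.union (hf.continuousOn.isOpen_inter_preimage isOpen_ball isOpen_compl_singleton))
    (V := ball 0 ρ ∪ ball 0 1 ∩ f ⁻¹' {0}ᶜ) fun z hz ↦ by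
      rcases (mem_closedBall_zero_iff.mp hz).lt_or_eq with hz | hz
      · exact Or.inl (mem_ball_zero_iff.mpr hz)
      · exact Or.inr ⟨mem_ball_zero_iff.mpr (hz ▸ hρ1), hnz z hz⟩
  set R := min R₁ 1
  have hRsub : ball (0 : ℂ) R ⊆ ball 0 ρ ∪ ball 0 1 ∩ f ⁻¹' {0}ᶜ :=
    (ball_subset_ball (min_le_left _ _)).trans hR₁
  have hzeros : ∀ z ∈ ball (0 : ℂ) R, f z = 0 → z ∈ ball 0 ρ := fun z hz h0 ↦
    (hRsub hz).resolve_right fun h ↦ h.2 h0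
  have hZ := (hf.analyticOnNhd isOpen_ball).finite_inter_preimage_zero
    (isConnected_ball one_pos) (by rwa [mem_ball_zero_iff, hρ_norm]) (hnz ρ hρ_norm)
    (isCompact_closedBall 0 ρ) (closedBall_subset_ball hρ1)
  obtain ⟨s, u, hs, hu, hu0, hfu⟩ := exists_eq_prod_sub_mul_of_zeros_subset isOpen_ball
    (hf.mono (ball_subset_ball (min_le_right _ _))) hZ.toFinset fun z hz h0 ↦
      hZ.mem_toFinset.mpr ⟨ball_subset_closedBall (hzeros z hz h0), h0⟩
  obtain ⟨ε, hε, hεR, hgh⟩ := exists_factorization_gh_of_eq_prod_sub_mul hρ0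
    (lt_min hρR₁ hρ1) (fun a ha ↦ mem_ball_zero_iff.mp (hzeros a (hs a ha).1 (hs a ha).2)) hu hu0
    hfu
  exact ⟨ε, hε, hεR.trans (min_le_right _ _), hgh⟩
end
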